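/- Let n ≥ 7 and let p be a prime dividing |Alt(n)|. Then there exists a prime l with l ∉ {2, 3, p} and an element x of Alt(n) whose order is a power of l such that p divides the size of the conjugacy class of x in Alt(n). -/

import Mathlib

/-- `x` is a vanishing element of `G`: some irreducible complex character of `G`
(character of a simple finite-dimensional complex representation) vanishes at `x`. -/
def IsVanishing (G : Type) [Group G] (x : G) : Prop :=
  ∃ V : FDRep ℂ G, CategoryTheory.Simple V ∧ V.character x = 0

/-- The size of the conjugacy class of `x`. -/
noncomputable def classSize {G : Type*} [Group G] (x : G) : ℕ :=
  Nat.card {y : G // IsConj x y}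

/-- `x` has prime power order. -/
def HasPrimePowerOrder {G : Type*} [Group G] (x : G) : Prop :=
  ∃ p k : ℕ, p.Prime ∧ orderOf x = p ^ k

/-!
Take `l = 5` (or `l = 7` when `p = 5`) and let `x` be a product of `k` disjoint `l`-cycles, where
`k < p` is chosen so that the block `n - lk + 1, …, n` contains a multiple of `p`. The centralizer
of `x` in `Sym(n)` has order `(n - lk)! · l^k · k!`, whose `p`-part is that of `(n - lk)!`, whereas
`|Alt(n)| = (n - lk)! · n(n-1)⋯(n-lk+1) / 2` has a strictly larger `p`-part. The centralizer of `x`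
in `Alt(n)` divides the one in `Sym(n)`, so `p` divides the class size `|Alt(n)| / |C(x)|`.
-/

open Nat Equiv Equiv.Perm

theorem Nat.Prime.dvd_of_mul_eq_of_dvd_mul {p s t a b c : ℕ} (hp : p.Prime) (ha : a ≠ 0)
    (h : s * t = a * b) (ht : t ∣ a * c) (hpb : p ∣ b) (hpc : ¬ p ∣ c) : p ∣ s := by
  by_contra hps
  have hab : p ^ (a.factorization p + 1) ∣ s * t := by
    rw [h, pow_succ]
    exact mul_dvd_mul (ordProj_dvd a p) hpb
  have hat : p ^ (a.factorization p + 1) ∣ a * c :=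
    (((hp.coprime_iff_not_dvd.2 hps).pow_left _).dvd_of_dvd_mul_left hab).trans ht
  exact pow_succ_factorization_not_dvd ha hp
    (((hp.coprime_iff_not_dvd.2 hpc).pow_left _).dvd_of_dvd_mul_right hat)

theorem classSize_mul_card_centralizer {G : Type*} [Group G] [Finite G] (x : G) :
    classSize x * Nat.card (Subgroup.centralizer {x}) = Nat.card G := by
  have e : {y : G // IsConj x y} ≃ MulAction.orbit (ConjAct G) x :=
    Equiv.subtypeEquivRight fun y => isConj_comm.trans ConjAct.mem_orbit_conjAct.symm
  rw [classSize, Nat.card_congr e, Subgroup.nat_card_centralizer_nat_card_stabilizer, mul_comm,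
    Nat.card_coe_set_eq, ← MulAction.index_stabilizer, Subgroup.card_mul_index]
  rfl

theorem Subgroup.card_centralizer_dvd_card_centralizer_coe {G : Type*} [Group G] [Finite G]
    (H : Subgroup G) (x : H) :
    Nat.card (Subgroup.centralizer {x}) ∣ Nat.card (Subgroup.centralizer {(x : G)}) := by
  rw [← Subgroup.card_map_of_injective H.subtype_injective]
  apply Subgroup.card_dvd_of_le
  rintro _ ⟨y, hy, rfl⟩
  rw [SetLike.mem_coe, Subgroup.mem_centralizer_singleton_iff] at hy
  rw [Subgroup.mem_centralizer_singleton_iff]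
  exact congrArg Subtype.val hy

theorem Nat.dvd_descFactorial_of_mod_lt {n m p : ℕ} (h : n % p < m) : p ∣ n.descFactorial m := by
  rw [descFactorial_eq_prod_range]
  exact (Nat.dvd_sub_mod n).trans (Finset.dvd_prod_of_mem _ (Finset.mem_range.2 h))

theorem Nat.Prime.dvd_descFactorial_div_two {n m p : ℕ} (hp : p.Prime) (hm : 4 ≤ m)
    (h : n % p < m) : p ∣ n.descFactorial m / 2 := by
  apply Nat.dvd_div_of_mul_dvd
  rcases hp.eq_two_or_odd' with rfl | hodd
  · exact (Nat.dvd_factorial (by norm_num) hm).trans (factorial_dvd_descFactorial n m)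
  · refine Nat.Coprime.mul_dvd_of_dvd_of_dvd ?_ ?_ (dvd_descFactorial_of_mod_lt h)
    · exact Nat.coprime_two_left.2 hodd
    · exact (Nat.dvd_factorial two_pos (by omega)).trans (factorial_dvd_descFactorial n m)

namespace Equiv.Perm

variable {α : Type*} [Fintype α] [DecidableEq α] {g : Perm α} {k l : ℕ}

theorem nat_card_centralizer_of_cycleType_eq_replicate (hk : k ≠ 0)
    (hg : g.cycleType = Multiset.replicate k l) :
    Nat.card (Subgroup.centralizer {g}) = (Fintype.card α - l * k)! * (l ^ k * k !) := by
  rw [nat_card_centralizer, hg, Multiset.sum_replicate, Multiset.prod_replicate,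
    Multiset.toFinset_replicate, if_neg hk, Finset.prod_singleton, Multiset.count_replicate_self,
    smul_eq_mul, mul_comm k l, mul_assoc]

theorem mem_alternatingGroup_of_cycleType_eq_replicate (hl : Odd l)
    (hg : g.cycleType = Multiset.replicate k l) : g ∈ alternatingGroup α := by
  rw [mem_alternatingGroup,
    sign_of_cycleType_eq_replicate hl.pos (by rw [hg, Multiset.card_replicate]), if_pos hl]

theorem pow_eq_one_of_cycleType_eq_replicate (hl : l.Prime)
    (hg : g.cycleType = Multiset.replicate k l) : g ^ l = 1 :=
  haveI := Fact.mk hl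
  pow_prime_eq_one_iff.2 fun _ h => Multiset.eq_of_mem_replicate (hg ▸ h)

end Equiv.Perm

section AlternatingGroup

variable {α : Type*} [Fintype α] [DecidableEq α]

theorem nat_card_alternatingGroup_eq_factorial_mul_descFactorial {m : ℕ} (hm : 2 ≤ m)
    (hmα : m ≤ Fintype.card α) :
    Nat.card (alternatingGroup α) =
      (Fintype.card α - m)! * ((Fintype.card α).descFactorial m / 2) := by
  have : Nontrivial α := Fintype.one_lt_card_iff_nontrivial.1 (by omega)
  have h2 : 2 ∣ (Fintype.card α).descFactorial m :=
    (Nat.dvd_factorial two_pos hm).trans (factorial_dvd_descFactorial _ m)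
  rw [← Nat.mul_div_assoc _ h2, factorial_mul_descFactorial hmα, ← Fintype.card_perm,
    ← two_mul_card_alternatingGroup, Nat.card_eq_fintype_card, Nat.mul_div_cancel_left _ two_pos]

theorem exists_pow_eq_one_dvd_classSize_alternatingGroup {p k l : ℕ} (hp : p.Prime)
    (hl : l.Prime) (hl2 : l ≠ 2) (hpk : ¬ p ∣ l ^ k * k !) (h4 : 4 ≤ l * k)
    (hlk : l * k ≤ Fintype.card α) (hmod : Fintype.card α % p < l * k) :
    ∃ x : alternatingGroup α, x ^ l = 1 ∧ p ∣ classSize x := by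
  obtain ⟨g, hg⟩ : ∃ g : Perm α, g.cycleType = Multiset.replicate k l := by
    rw [exists_with_cycleType_iff, Multiset.sum_replicate, smul_eq_mul, mul_comm]
    exact ⟨hlk, fun a ha => (Multiset.eq_of_mem_replicate ha).symm ▸ hl.two_le⟩
  let x : alternatingGroup α :=
    ⟨g, mem_alternatingGroup_of_cycleType_eq_replicate (hl.odd_of_ne_two hl2) hg⟩
  refine ⟨x, Subtype.ext (pow_eq_one_of_cycleType_eq_replicate hl hg), ?_⟩
  have hcent := (alternatingGroup α).card_centralizer_dvd_card_centralizer_coe x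
  rw [nat_card_centralizer_of_cycleType_eq_replicate (by rintro rfl; omega) hg] at hcent
  refine hp.dvd_of_mul_eq_of_dvd_mul (factorial_ne_zero _) ?_ hcent
    (hp.dvd_descFactorial_div_two h4 hmod) hpk
  rw [classSize_mul_card_centralizer, nat_card_alternatingGroup_eq_factorial_mul_descFactorial
    (by omega) hlk]

end AlternatingGroup

theorem exists_cycle_length_and_count {n p : ℕ} (hp : p.Prime) (hn : 7 ≤ n) (hpn : p ≤ n) :
    ∃ l k : ℕ, l.Prime ∧ l ≠ 2 ∧ l ≠ 3 ∧ l ≠ p ∧ k < p ∧ 4 ≤ l * k ∧ l * k ≤ n ∧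
      n % p < l * k := by
  have hmod : n % p < p := Nat.mod_lt n hp.pos
  have hmodn : n % p + p ≤ n := by
    have := Nat.mod_add_div n p
    have := Nat.le_mul_of_pos_right p (Nat.div_pos hpn hp.pos)
    omega
  have := hp.two_le
  by_cases hp5 : p = 5
  · exact ⟨7, 1, by norm_num, by norm_num, by norm_num, by omega, by omega, by omega, by omega,
      by omega⟩
  · exact ⟨5, n % p / 5 + 1, by norm_num, by norm_num, by norm_num, Ne.symm hp5, by omega,
      by omega, by omega, by omega⟩

theorem stmt_10 (n p : ℕ) (hn : 7 ≤ n) (hp : p.Prime)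
    (hpd : p ∣ Nat.card (alternatingGroup (Fin n))) :
    ∃ l : ℕ, l.Prime ∧ l ≠ 2 ∧ l ≠ 3 ∧ l ≠ p ∧
      ∃ x : alternatingGroup (Fin n), (∃ m : ℕ, orderOf x = l ^ m) ∧
        p ∣ classSize x := by
  have hpn : p ≤ n := by
    refine hp.dvd_factorial.1 (hpd.trans ?_)
    simpa [Fintype.card_perm] using Subgroup.card_subgroup_dvd_card (alternatingGroup (Fin n))
  obtain ⟨l, k, hl, hl2, hl3, hlp, hkp, h4, hlk, hmod⟩ := exists_cycle_length_and_count hp hn hpn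
  have hpk : ¬ p ∣ l ^ k * k ! := by
    rw [hp.dvd_mul, hp.dvd_factorial, not_or, not_le]
    exact ⟨fun h => hlp ((Nat.prime_dvd_prime_iff_eq hp hl).1 (hp.dvd_of_dvd_pow h)).symm, hkp⟩
  obtain ⟨x, hx, hdvd⟩ := exists_pow_eq_one_dvd_classSize_alternatingGroup (α := Fin n) hp hl hl2
    hpk h4 (by simpa) (by simpa)
  obtain ⟨m, -, hm⟩ := (Nat.dvd_prime_pow hl).1 (pow_one l ▸ orderOf_dvd_of_pow_eq_one hx)
  exact ⟨l, hl, hl2, hl3, hlp, x, ⟨m, hm⟩, hdvd⟩
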